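/- Let A, E ∈ ℂ^{n×n} be such that the pencil L(s) = A + sE is regular, and let λ₁, …, λ_{n+1} ∈ ℂ be pairwise distinct with A + λ_i E invertible for each i. For each i set M_i = (A + λ_i E)^{−1} and let H_i ∈ ℂ^{2n×2n} be the Hermitian block matrix H_i = [[M_iᴴM_i, λ_i M_iᴴM_i], [conj(λ_i) M_iᴴM_i, |λ_i|² M_iᴴM_i]]. Then the unstructured distance to singularity satisfies δ(A,E)² ≥ max_{i=1,…,n+1} 1/λ_max(H_i), where δ(A,E) := inf{ √(‖Δ_A‖² + ‖Δ_E‖²) : Δ_A, Δ_E ∈ ℂ^{n×n}, det((A − Δ_A) + λ(E − Δ_E)) = 0 for all λ ∈ ℂ }. -/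

import Mathlib

open Matrix

/-- The spectral norm (ℓ² operator norm) of a complex matrix. -/
noncomputable def specNorm {k : Type*} [Fintype k] [DecidableEq k]
    (X : Matrix k k ℂ) : ℝ :=
  ‖Matrix.toEuclideanCLM (𝕜 := ℂ) X‖

/-- The largest eigenvalue of a Hermitian matrix (junk value `0` otherwise). -/
noncomputable def lamMax {k : Type*} [Fintype k] [DecidableEq k]
    (H : Matrix k k ℂ) : ℝ :=
  if h : H.IsHermitian then ⨆ i, h.eigenvalues i else 0

/-!
Fix `λ = λᵢ`, put `M = (A + λE)⁻¹` and `K = [M, λM]`, so that `Hᵢ = KᴴK`. If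
`(A - ΔA) + λ(E - ΔE)` is singular, pick `y ≠ 0` with `(A + λE) y = (ΔA + λΔE) y`; then
`y = K v` for `v = (ΔA y, ΔE y)`, and the Rayleigh bound for `Hᵢ` gives
`‖y‖² = vᴴ Hᵢ v ≤ λ_max(Hᵢ) ‖v‖² ≤ λ_max(Hᵢ) (‖ΔA‖² + ‖ΔE‖²) ‖y‖²`.
Hence `1/λ_max(Hᵢ) ≤ ‖ΔA‖² + ‖ΔE‖²` for every perturbation that makes the pencil singular,
and so `1/λ_max(Hᵢ) ≤ δ(A,E)²` for each `i`.
-/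

open scoped MatrixOrder ComplexOrder

section

variable {k : Type*} [Fintype k] [DecidableEq k]

lemma lamMax_of_isEmpty [IsEmpty k] (H : Matrix k k ℂ) : lamMax H = 0 := by
  unfold lamMax
  split_ifs
  exacts [Real.iSup_of_isEmpty _, rfl]

lemma Matrix.PosSemidef.lamMax_nonneg {H : Matrix k k ℂ} (hH : H.PosSemidef) :
    0 ≤ lamMax H := by
  rw [lamMax, dif_pos hH.1]
  exact Real.iSup_nonneg hH.eigenvalues_nonneg

lemma Matrix.IsHermitian.le_lamMax_smul_one {H : Matrix k k ℂ} (hH : H.IsHermitian) :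
    H ≤ lamMax H • 1 := by
  rw [← Algebra.algebraMap_eq_smul_one]
  refine le_algebraMap_of_spectrum_le (fun x hx => ?_) hH.isSelfAdjoint
  obtain ⟨i, rfl⟩ := hH.spectrum_real_eq_range_eigenvalues ▸ hx
  rw [lamMax, dif_pos hH]
  exact le_ciSup (Set.finite_range _).bddAbove i

lemma Matrix.IsHermitian.re_dotProduct_mulVec_le {H : Matrix k k ℂ} (hH : H.IsHermitian)
    (v : k → ℂ) : (star v ⬝ᵥ H *ᵥ v).re ≤ lamMax H * (star v ⬝ᵥ v).re := by
  have h := (Complex.le_def.mp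
    ((Matrix.le_iff.mp hH.le_lamMax_smul_one).dotProduct_mulVec_nonneg v)).1
  simpa [sub_mulVec, smul_mulVec, dotProduct_sub, dotProduct_smul] using h

lemma re_star_mulVec_dotProduct_mulVec_le_lamMax {m l : Type*} [Fintype m] [Fintype l]
    [DecidableEq l] (K : Matrix m l ℂ) (v : l → ℂ) :
    (star (K *ᵥ v) ⬝ᵥ K *ᵥ v).re ≤ lamMax (Kᴴ * K) * (star v ⬝ᵥ v).re := by
  have h := (isHermitian_conjTranspose_mul_self K).re_dotProduct_mulVec_le v
  rwa [← mulVec_mulVec, dotProduct_mulVec, ← star_mulVec] at h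

lemma re_star_dotProduct_self {m : Type*} [Fintype m] (v : m → ℂ) :
    (star v ⬝ᵥ v).re = ‖WithLp.toLp 2 v‖ ^ 2 := by
  rw [← inner_self_eq_norm_sq (𝕜 := ℂ), EuclideanSpace.inner_eq_star_dotProduct,
    dotProduct_comm]
  rfl

lemma re_star_mulVec_dotProduct_mulVec_le (X : Matrix k k ℂ) (v : k → ℂ) :
    (star (X *ᵥ v) ⬝ᵥ X *ᵥ v).re ≤ specNorm X ^ 2 * (star v ⬝ᵥ v).re := by
  rw [re_star_dotProduct_self, re_star_dotProduct_self, ← mul_pow,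
    ← toEuclideanCLM_toLp (𝕜 := ℂ)]
  exact pow_le_pow_left₀ (norm_nonneg _) ((toEuclideanCLM (𝕜 := ℂ) X).le_opNorm _) 2

lemma fromBlocks_conjTranspose_mul_self_smul_eq {m n R : Type*} [Fintype m] [CommRing R]
    [StarRing R] (M : Matrix m n R) (μ : R) :
    fromBlocks (Mᴴ * M) (μ • (Mᴴ * M)) (starRingEnd R μ • (Mᴴ * M))
        ((starRingEnd R μ * μ) • (Mᴴ * M)) =
      (fromCols M (μ • M))ᴴ * fromCols M (μ • M) := by
  rw [starRingEnd_apply, conjTranspose_fromCols_eq_fromRows_conjTranspose,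
    fromRows_mul_fromCols, conjTranspose_smul, Matrix.mul_smul, Matrix.smul_mul,
    Matrix.mul_smul, Matrix.smul_mul, smul_smul, mul_comm μ]

lemma one_div_lamMax_le_of_det_eq_zero {A E DA DE : Matrix k k ℂ} {μ : ℂ}
    (hinv : IsUnit (A + μ • E)) (hsing : ((A - DA) + μ • (E - DE)).det = 0) :
    1 / lamMax ((fromCols (A + μ • E)⁻¹ (μ • (A + μ • E)⁻¹))ᴴ *
        fromCols (A + μ • E)⁻¹ (μ • (A + μ • E)⁻¹)) ≤
      specNorm DA ^ 2 + specNorm DE ^ 2 := by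
  set M := (A + μ • E)⁻¹
  set K := fromCols M (μ • M)
  set L := lamMax (Kᴴ * K)
  have hL : 0 ≤ L := (posSemidef_conjTranspose_mul_self K).lamMax_nonneg
  have hpencil : (A - DA) + μ • (E - DE) = (A + μ • E) - (DA + μ • DE) := by
    rw [smul_sub]; abel
  obtain ⟨y, hy0, hy⟩ := exists_mulVec_eq_zero_iff.mpr (hpencil ▸ hsing)
  rw [sub_mulVec, sub_eq_zero] at hy
  set v := Sum.elim (DA *ᵥ y) (DE *ᵥ y)
  -- `K v = M (ΔA + μ ΔE) y = M (A + μ E) y = y`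
  have hKv : K *ᵥ v = y := by
    rw [fromCols_mulVec_sumElim, smul_mulVec, ← mulVec_smul, ← mulVec_add, ← smul_mulVec,
      ← add_mulVec, ← hy, mulVec_mulVec, nonsing_inv_mul _ ((isUnit_iff_isUnit_det _).mp hinv),
      one_mulVec]
  have hypos : 0 < (star y ⬝ᵥ y).re :=
    (Complex.lt_def.mp (dotProduct_star_self_pos_iff.mpr hy0)).1
  refine div_le_of_le_mul₀ hL (by positivity) (le_of_mul_le_mul_right ?_ hypos)
  calc 1 * (star y ⬝ᵥ y).re = (star (K *ᵥ v) ⬝ᵥ K *ᵥ v).re := by rw [one_mul, hKv]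
    _ ≤ L * (star v ⬝ᵥ v).re := re_star_mulVec_dotProduct_mulVec_le_lamMax K v
    _ = L * ((star (DA *ᵥ y) ⬝ᵥ DA *ᵥ y).re + (star (DE *ᵥ y) ⬝ᵥ DE *ᵥ y).re) := by
      rw [Function.star_sumElim, sumElim_dotProduct_sumElim, Complex.add_re]
    _ ≤ L * (specNorm DA ^ 2 * (star y ⬝ᵥ y).re + specNorm DE ^ 2 * (star y ⬝ᵥ y).re) := by
      gcongr <;> exact re_star_mulVec_dotProduct_mulVec_le _ y
    _ = (specNorm DA ^ 2 + specNorm DE ^ 2) * L * (star y ⬝ᵥ y).re := by ring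

end

theorem unstructured_distance_to_singularity_lower_bound_general
    {n : ℕ} (A E : Matrix (Fin n) (Fin n) ℂ)
    (l : Fin (n + 1) → ℂ)
    (hinv : ∀ i, IsUnit (A + l i • E)) :
    (sInf {r : ℝ | ∃ DA DE : Matrix (Fin n) (Fin n) ℂ,
        (∀ μ : ℂ, ((A - DA) + μ • (E - DE)).det = 0) ∧
        r = Real.sqrt (specNorm DA ^ 2 + specNorm DE ^ 2)}) ^ 2 ≥
      ⨆ i : Fin (n + 1),
        1 / lamMax (Matrix.fromBlocks
          (((A + l i • E)⁻¹)ᴴ * (A + l i • E)⁻¹)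
          (l i • (((A + l i • E)⁻¹)ᴴ * (A + l i • E)⁻¹))
          ((starRingEnd ℂ (l i)) • (((A + l i • E)⁻¹)ᴴ * (A + l i • E)⁻¹))
          ((starRingEnd ℂ (l i) * l i) •
            (((A + l i • E)⁻¹)ᴴ * (A + l i • E)⁻¹))) := by
  refine ciSup_le fun i => ?_
  rcases isEmpty_or_nonempty (Fin n) with hn | hn
  -- For `n = 0` no perturbation is singular (the empty determinant is `1`), so the infimum is
  -- the junk value `sInf ∅ = 0`; the bound survives because `λ_max = 0` and `1 / 0 = 0`.
  · rw [lamMax_of_isEmpty, div_zero]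
    positivity
  rw [fromBlocks_conjTranspose_mul_self_smul_eq, ← Real.sqrt_le_left (Real.sInf_nonneg ?_)]
  · refine le_csInf ⟨_, A, E, fun μ => by simp, rfl⟩ ?_
    rintro _ ⟨DA, DE, hsing, rfl⟩
    exact Real.sqrt_le_sqrt (one_div_lamMax_le_of_det_eq_zero (hinv i) (hsing (l i)))
  · rintro _ ⟨_, _, _, rfl⟩
    exact Real.sqrt_nonneg _

/-- A family of lower bounds for the unstructured distance to singularity:
for pairwise distinct `λ₁, …, λ_{n+1}` at which the pencil is invertible,
`δ(A,E)² ≥ max_i 1/λ_max(H_i)` with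
`H_i = [[M_iᴴM_i, λ_i M_iᴴM_i], [conj(λ_i) M_iᴴM_i, |λ_i|² M_iᴴM_i]]`,
`M_i = (A + λ_i E)⁻¹`. -/
theorem unstructured_distance_to_singularity_lower_bound
    {n : ℕ} (A E : Matrix (Fin n) (Fin n) ℂ)
    (hreg : ∃ l : ℂ, (A + l • E).det ≠ 0)
    (l : Fin (n + 1) → ℂ) (hl : Function.Injective l)
    (hinv : ∀ i, IsUnit (A + l i • E)) :
    (sInf {r : ℝ | ∃ DA DE : Matrix (Fin n) (Fin n) ℂ,
        (∀ μ : ℂ, ((A - DA) + μ • (E - DE)).det = 0) ∧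
        r = Real.sqrt (specNorm DA ^ 2 + specNorm DE ^ 2)}) ^ 2 ≥
      ⨆ i : Fin (n + 1),
        1 / lamMax (Matrix.fromBlocks
          (((A + l i • E)⁻¹)ᴴ * (A + l i • E)⁻¹)
          (l i • (((A + l i • E)⁻¹)ᴴ * (A + l i • E)⁻¹))
          ((starRingEnd ℂ (l i)) • (((A + l i • E)⁻¹)ᴴ * (A + l i • E)⁻¹))
          ((starRingEnd ℂ (l i) * l i) •
            (((A + l i • E)⁻¹)ᴴ * (A + l i • E)⁻¹))) :=
  unstructured_distance_to_singularity_lower_bound_general A E l hinv
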